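/- arXiv:2404.02413 — 4 statements merged into one kernel-verified Lean document; each statement's English description precedes it below -/
import Mathlib

section
/- For every integer k ≥ 0 and every integer r ≥ 1, for all t in a neighborhood of 0 on which the moment generating function of Y is finite, one has the Taylor expansion (1/k!)·(E[e^{tY}] − 1)^k · e^{rt} = Σ_{n=0}^{∞} {n+r \brace k+r}_{r,Y} · t^n/n!; in particular {n+r \brace k+r}_{r,Y} = 0 whenever 0 ≤ n < k. -/
/-!
By independence, the mgf of `S_j + r` is `M(t)^j e^{rt}` with `M` the mgf of `Y`, so the binomial
theorem writes `(1/k!) (M(t) - 1)^k e^{rt}` as `(1/k!) Σ_j binom(k,j) (-1)^(k-j) mgf_{S_j+r}(t)`.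
Its `n`-th derivative at `0` is therefore `{n+r \brace k+r}_{r,Y}`. The function is analytic at `0`,
hence equal to its Taylor series near `0`, and since `M(0) = 1` it vanishes to order at least `k`
there, which kills the Taylor coefficients of index `n < k`.
-/

open MeasureTheory ProbabilityTheory Finset

/-- The probabilistic `r`-Stirling numbers of the second kind associated with a random
variable (with iid copies `Ys`):
`{n+r \brace k+r}_{r,Y} = (1/k!) Σ_{j=0}^k binom(k,j) (-1)^(k-j) E[(S_j + r)^n]`,
where `S_j = Y_1 + ⋯ + Y_j`. -/
noncomputable def probStirling {Ω : Type*} [MeasurableSpace Ω] (μ : Measure Ω)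
    (Ys : ℕ → Ω → ℝ) (r n k : ℕ) : ℝ :=
  (1 / (Nat.factorial k : ℝ)) * ∑ j ∈ Finset.range (k + 1),
    (k.choose j : ℝ) * (-1) ^ (k - j) *
      ∫ ω, ((∑ i ∈ Finset.range j, Ys i ω) + (r : ℝ)) ^ n ∂μ

open Filter Topology

theorem AnalyticAt.eventually_hasSum_iteratedDeriv {𝕜 : Type*} [NontriviallyNormedField 𝕜]
    [CompleteSpace 𝕜] [CharZero 𝕜] {f : 𝕜 → 𝕜} {x : 𝕜} (hf : AnalyticAt 𝕜 f x) :
    ∀ᶠ t in 𝓝 x,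
      HasSum (fun n => iteratedDeriv n f x * (t - x) ^ n / n.factorial) (f t) := by
  filter_upwards [hf.hasFPowerSeriesAt.eventually_hasSum_sub] with t ht
  simpa only [FormalMultilinearSeries.ofScalars_apply_eq, smul_eq_mul, div_mul_eq_mul_div]
    using ht

theorem iteratedDeriv_pow_mul_eq_zero {𝕜 : Type*} [NontriviallyNormedField 𝕜]
    [CompleteSpace 𝕜] [CharZero 𝕜] {f g : 𝕜 → 𝕜} {x : 𝕜} (hf : AnalyticAt 𝕜 f x) (hfx : f x = 0)
    (hg : AnalyticAt 𝕜 g x) {k n : ℕ} (hn : n < k) :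
    iteratedDeriv n (fun t => f t ^ k * g t) x = 0 := by
  have hle : (k : ℕ∞) ≤ analyticOrderAt (fun t => f t ^ k * g t) x := by
    have hf_order : 1 ≤ analyticOrderAt f x := by
      rw [Order.one_le_iff_ne_zero, hf.analyticOrderAt_ne_zero]
      exact hfx
    calc (k : ℕ∞) = k • 1 := by simp
      _ ≤ k • analyticOrderAt f x := by gcongr
      _ = analyticOrderAt (f ^ k) x := (analyticOrderAt_pow hf k).symm
      _ ≤ analyticOrderAt (f ^ k) x + analyticOrderAt g x := le_self_add
      _ = analyticOrderAt (fun t => f t ^ k * g t) x := (analyticOrderAt_mul (hf.pow k) hg).symm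
  exact (natCast_le_analyticOrderAt_iff_iteratedDeriv_eq_zero ((hf.pow k).mul hg)).1 hle n hn

section IID

variable {Ω : Type*} [MeasurableSpace Ω] {μ : Measure Ω} {X : ℕ → Ω → ℝ} {Y : Ω → ℝ}

theorem ProbabilityTheory.iIndepFun.mgf_sum_range_add_const (hindep : iIndepFun X μ)
    (hX : ∀ i, Measurable (X i)) (hident : ∀ i, IdentDistrib (X i) Y μ μ) (j : ℕ) (c t : ℝ) :
    mgf (fun ω => ∑ i ∈ range j, X i ω + c) μ t = mgf Y μ t ^ j * Real.exp (t * c) := by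
  rw [mgf_add_const, ← Finset.sum_fn, hindep.mgf_sum hX,
    Finset.prod_congr rfl fun i _ => mgf_congr_of_identDistrib _ _ (hident i) t,
    prod_const, card_range]

theorem ProbabilityTheory.iIndepFun.integrableExpSet_subset_sum_range_add_const
    [IsFiniteMeasure μ] (hindep : iIndepFun X μ) (hX : ∀ i, Measurable (X i))
    (hident : ∀ i, IdentDistrib (X i) Y μ μ) (j : ℕ) (c : ℝ) :
    integrableExpSet Y μ ⊆ integrableExpSet (fun ω => ∑ i ∈ range j, X i ω + c) μ := by
  intro t hY
  have hXi : ∀ i ∈ range j, Integrable (fun ω => Real.exp (t * X i ω)) μ := fun i _ =>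
    ((hident i).comp (measurable_const_mul t).exp).integrable_iff.2 hY
  simpa only [integrableExpSet, Set.mem_ofPred_eq, mul_add, Real.exp_add, Finset.sum_apply]
    using (hindep.integrable_exp_mul_sum hX hXi).mul_const (Real.exp (t * c))

theorem zero_mem_interior_integrableExpSet_of_forall_abs_lt {Z : Ω → ℝ} {ε : ℝ} (hε : 0 < ε)
    (hZ : ∀ t : ℝ, |t| < ε → Integrable (fun ω => Real.exp (t * Z ω)) μ) :
    0 ∈ interior (integrableExpSet Z μ) :=
  interior_mono (fun t ht => hZ t (abs_lt.2 ht))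
    ((isOpen_Ioo (a := -ε) (b := ε)).interior_eq ▸ ⟨neg_lt_zero.2 hε, hε⟩)

noncomputable def probStirlingGF (μ : Measure Ω) (Y : Ω → ℝ) (r k : ℕ) (t : ℝ) : ℝ :=
  1 / (k.factorial : ℝ) * (mgf Y μ t - 1) ^ k * Real.exp (r * t)

theorem analyticAt_probStirlingGF (h0 : 0 ∈ interior (integrableExpSet Y μ)) (r k : ℕ) :
    AnalyticAt ℝ (probStirlingGF μ Y r k) 0 := by
  have := analyticAt_mgf h0
  unfold probStirlingGF
  fun_prop

theorem iteratedDeriv_probStirlingGF [IsFiniteMeasure μ] (hindep : iIndepFun X μ)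
    (hX : ∀ i, Measurable (X i)) (hident : ∀ i, IdentDistrib (X i) Y μ μ)
    (h0 : 0 ∈ interior (integrableExpSet Y μ)) (r k n : ℕ) :
    iteratedDeriv n (probStirlingGF μ Y r k) 0 = probStirling μ X r n k := by
  set S : ℕ → Ω → ℝ := fun j ω => ∑ i ∈ range j, X i ω + r
  have hS0 : ∀ j, 0 ∈ interior (integrableExpSet (S j) μ) := fun j =>
    interior_mono (hindep.integrableExpSet_subset_sum_range_add_const hX hident j r) h0
  have hbinom : probStirlingGF μ Y r k = fun t => ∑ j ∈ range (k + 1),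
      1 / (k.factorial : ℝ) * ((k.choose j : ℝ) * (-1) ^ (k - j)) * mgf (S j) μ t := by
    funext t
    simp only [S, probStirlingGF, hindep.mgf_sum_range_add_const hX hident, sub_eq_add_neg,
      add_pow, mul_sum, sum_mul]
    refine sum_congr rfl fun j _ => ?_
    rw [mul_comm t]
    ring
  rw [hbinom,
    iteratedDeriv_fun_sum fun j _ => contDiffAt_const.mul (analyticAt_mgf (hS0 j)).contDiffAt]
  simp only [iteratedDeriv_const_mul_field, iteratedDeriv_mgf_zero (hS0 _), probStirling, mul_sum]
  refine sum_congr rfl fun j _ => ?_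
  simp only [S, Pi.pow_apply]
  ring

theorem iteratedDeriv_probStirlingGF_eq_zero [IsProbabilityMeasure μ]
    (h0 : 0 ∈ interior (integrableExpSet Y μ)) (r : ℕ) {k n : ℕ} (hn : n < k) :
    iteratedDeriv n (probStirlingGF μ Y r k) 0 = 0 := by
  have hM := analyticAt_mgf h0
  have hGF : probStirlingGF μ Y r k =
      fun t => (mgf Y μ t - 1) ^ k * (1 / (k.factorial : ℝ) * Real.exp (r * t)) := by
    funext t
    simp only [probStirlingGF]
    ring
  rw [hGF]
  exact iteratedDeriv_pow_mul_eq_zero (by fun_prop) (by simp) (by fun_prop) hn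

end IID

theorem probStirling_generating_function_general
    {Ω : Type*} [MeasurableSpace Ω] (μ : Measure Ω) [IsProbabilityMeasure μ]
    (Y : Ω → ℝ) (Ys : ℕ → Ω → ℝ)
    (hYs : ∀ i, Measurable (Ys i))
    (hindep : iIndepFun Ys μ)
    (hident : ∀ i, IdentDistrib (Ys i) Y μ μ)
    (ε : ℝ) (hε : 0 < ε)
    (hmgf : ∀ t : ℝ, |t| < ε → Integrable (fun ω => Real.exp (t * Y ω)) μ)
    (k r : ℕ) :
    (∃ δ : ℝ, 0 < δ ∧ δ ≤ ε ∧ ∀ t : ℝ, |t| < δ →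
      HasSum (fun n : ℕ => probStirling μ Ys r n k * t ^ n / (Nat.factorial n : ℝ))
        ((1 / (Nat.factorial k : ℝ)) * ((∫ ω, Real.exp (t * Y ω) ∂μ) - 1) ^ k *
          Real.exp (r * t))) ∧
    ∀ n : ℕ, n < k → probStirling μ Ys r n k = 0 := by
  have h0 := zero_mem_interior_integrableExpSet_of_forall_abs_lt hε hmgf
  have hcoeff := iteratedDeriv_probStirlingGF hindep hYs hident h0 r k
  refine ⟨?_, fun n hn => hcoeff n ▸ iteratedDeriv_probStirlingGF_eq_zero h0 r hn⟩
  obtain ⟨δ, hδ, hsum⟩ := Metric.eventually_nhds_iff.1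
    (analyticAt_probStirlingGF (μ := μ) h0 r k).eventually_hasSum_iteratedDeriv
  refine ⟨min δ ε, lt_min hδ hε, min_le_right _ _, fun t ht => ?_⟩
  have h := hsum (by rw [Real.dist_0_eq_abs]; exact ht.trans_le (min_le_left _ _))
  simp only [hcoeff, sub_zero] at h
  exact h

/-- Generating function of the probabilistic `r`-Stirling numbers of the second kind:
for `t` in a neighborhood of `0` on which the mgf of `Y` is finite,
`(1/k!) (E[e^{tY}] - 1)^k e^{rt} = Σ_{n=0}^∞ {n+r \brace k+r}_{r,Y} t^n/n!`;
in particular `{n+r \brace k+r}_{r,Y} = 0` for `0 ≤ n < k`. -/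
theorem probStirling_generating_function
    {Ω : Type*} [MeasurableSpace Ω] (μ : Measure Ω) [IsProbabilityMeasure μ]
    (Y : Ω → ℝ) (Ys : ℕ → Ω → ℝ)
    (hY : Measurable Y) (hYs : ∀ i, Measurable (Ys i))
    (hindep : iIndepFun Ys μ)
    (hident : ∀ i, IdentDistrib (Ys i) Y μ μ)
    (ε : ℝ) (hε : 0 < ε)
    (hmgf : ∀ t : ℝ, |t| < ε → Integrable (fun ω => Real.exp (t * Y ω)) μ)
    (k r : ℕ) (hr : 1 ≤ r) :
    (∃ δ : ℝ, 0 < δ ∧ δ ≤ ε ∧ ∀ t : ℝ, |t| < δ →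
      HasSum (fun n : ℕ => probStirling μ Ys r n k * t ^ n / (Nat.factorial n : ℝ))
        ((1 / (Nat.factorial k : ℝ)) * ((∫ ω, Real.exp (t * Y ω) ∂μ) - 1) ^ k *
          Real.exp (r * t))) ∧
    ∀ n : ℕ, n < k → probStirling μ Ys r n k = 0 :=
  probStirling_generating_function_general μ Y Ys hYs hindep hident ε hε hmgf k r
end

section
/- For every real number x and every integer r ≥ 0, for all t in a neighborhood of 0 on which the moment generating function of Y is finite, one has e^{x(E[e^{tY}] − 1)} · e^{rt} = Σ_{n=0}^{∞} φ_{n,r}^{Y}(x) · t^n/n! (the series converging for such t). -/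
open MeasureTheory ProbabilityTheory Finset

/-- The probabilistic `r`-Bell polynomials associated with a random variable:
`φ_{n,r}^Y(x) = Σ_{k=0}^n {n+r \brace k+r}_{r,Y} x^k`. -/
noncomputable def probBell {Ω : Type*} [MeasurableSpace Ω] (μ : Measure Ω)
    (Ys : ℕ → Ω → ℝ) (r n : ℕ) (x : ℝ) : ℝ :=
  ∑ k ∈ Finset.range (n + 1), probStirling μ Ys r n k * x ^ k

/-!
Write `m n j = E[(S_j + r)^n]`, so that `k! {n+r \brace k+r}_{r,Y}` is the `k`-th forward
difference of `j ↦ m n j` at `0`. By independence, `∑ₙ m n j tⁿ/n! = E[e^{t(S_j + r)}] =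
e^{rt} M(t)^j` with `M(t) = E[e^{tY}]`, and the `k`-th forward difference of `j ↦ e^{rt} M(t)^j`
at `0` is `e^{rt} (M(t) - 1)^k`; summing these against `x^k/k!` gives `e^{rt} e^{x(M(t) - 1)}`.
The double series over `(n, k)` converges absolutely, since `e^{|t| |a|} ≤ e^{ta} + e^{-ta}` bounds
the absolute moments by `M(±t)^j`, so the two sums may be interchanged. Finally, expanding
`(S_j + Y_{j+1} + r)^n` binomially shows that the forward difference of `m n` is a combination of
the `m i` with `i < n`, so differences of order `k > n` vanish and the inner sum over `k` is the
finite sum defining `φ_{n,r}^Y(x)`.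
-/

open Real
open scoped fwdDiff Nat

-- The space in `Δ_[1] ^[k]` is needed: with all of Mathlib imported, `]^` lexes as one token.

theorem hasSum_pow_div_factorial_exp (z : ℝ) : HasSum (fun n : ℕ => z ^ n / n !) (exp z) := by
  rw [exp_eq_exp_ℝ]
  exact NormedSpace.expSeries_div_hasSum_exp z

section FwdDiff

theorem fwdDiff_iter_eq_zero_of_lt_of_triangular {G R : Type*} [AddCommGroup G] [Monoid R]
    [DistribMulAction R G] {a : ℕ → ℕ → G} {c : ℕ → ℕ → R}
    (ha : ∀ n, Δ_[1] (a n) = ∑ i ∈ range n, c n i • a i) {n k : ℕ} (hnk : n < k) :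
    Δ_[1] ^[k] (a n) = 0 := by
  induction n using Nat.strong_induction_on generalizing k with
  | _ n ih =>
    obtain ⟨k, rfl⟩ : ∃ k', k = k' + 1 := ⟨k - 1, by omega⟩
    rw [Function.iterate_succ_apply, ha, fwdDiff_iter_finsetSum]
    refine sum_eq_zero fun i hi => ?_
    rw [fwdDiff_iter_const_smul, ih i (mem_range.mp hi) (by have := mem_range.mp hi; omega),
      smul_zero]

variable {R : Type*} [CommRing R]

theorem fwdDiff_iter_nat_apply_zero (f : ℕ → R) (k : ℕ) :
    Δ_[1] ^[k] f 0 = ∑ j ∈ range (k + 1), (k.choose j : R) * (-1) ^ (k - j) * f j := by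
  rw [fwdDiff_iter_eq_sum_shift]
  refine sum_congr rfl fun j _ => ?_
  simp only [zero_add, smul_eq_mul, mul_one, zsmul_eq_mul]
  push_cast
  ring

theorem fwdDiff_iter_const_mul_pow (A M : R) (k : ℕ) :
    Δ_[1] ^[k] (fun j : ℕ => A * M ^ j) = fun j => A * (M - 1) ^ k * M ^ j := by
  induction k with
  | zero => simp
  | succ k ih =>
    rw [Function.iterate_succ_apply', ih]
    ext j
    simp only [fwdDiff, pow_succ]
    ring

theorem HasSum.fwdDiff_iter {ι G : Type*} [AddCommGroup G] [TopologicalSpace G]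
    [IsTopologicalAddGroup G] {a : ι → ℕ → G} {b : ℕ → G}
    (h : ∀ j, HasSum (fun i => a i j) (b j)) (k y : ℕ) :
    HasSum (fun i => Δ_[1] ^[k] (a i) y) (Δ_[1] ^[k] b y) := by
  simp_rw [fwdDiff_iter_eq_sum_shift]
  exact hasSum_sum fun j _ => (h _).const_smul _

theorem abs_fwdDiff_iter_apply_zero_le (f : ℕ → ℝ) (k : ℕ) :
    |Δ_[1] ^[k] f 0| ≤ ∑ j ∈ range (k + 1), (k.choose j : ℝ) * |f j| := by
  rw [fwdDiff_iter_nat_apply_zero]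
  refine (abs_sum_le_sum_abs _ _).trans_eq (sum_congr rfl fun j _ => ?_)
  simp [abs_mul]

end FwdDiff

section ExponentialTransform

variable {m B : ℕ → ℕ → ℝ} {w β : ℕ → ℝ} {K D : ℝ}

theorem summable_pow_div_factorial_mul_sum_choose_mul {y : ℝ} (hy : 0 ≤ y)
    (hB0 : ∀ n j, 0 ≤ B n j) (hB : ∀ j, HasSum (fun n => B n j) (β j))
    (hβ : ∀ j, β j ≤ K * D ^ j) :
    Summable fun p : ℕ × ℕ =>
      y ^ p.1 / p.1 ! * ∑ j ∈ range (p.1 + 1), (p.1.choose j : ℝ) * B p.2 j := by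
  have hrow : ∀ k, HasSum (fun n => y ^ k / k ! * ∑ j ∈ range (k + 1), (k.choose j : ℝ) * B n j)
      (y ^ k / k ! * ∑ j ∈ range (k + 1), (k.choose j : ℝ) * β j) :=
    fun k => (hasSum_sum fun j _ => (hB j).mul_left _).mul_left _
  have hβ0 : ∀ j, 0 ≤ β j := fun j => (hB j).nonneg (hB0 · j)
  refine (summable_prod_of_nonneg fun p => ?_).mpr ⟨fun k => (hrow k).summable, ?_⟩
  · exact mul_nonneg (by positivity) (sum_nonneg fun j _ => mul_nonneg (by positivity) (hB0 _ _))
  simp_rw [fun k => (hrow k).tsum_eq]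
  refine .of_nonneg_of_le (fun k => ?_) (fun k => ?_)
    ((Real.summable_pow_div_factorial (y * (D + 1))).mul_left K)
  · exact mul_nonneg (by positivity) (sum_nonneg fun j _ => mul_nonneg (by positivity) (hβ0 j))
  calc y ^ k / k ! * ∑ j ∈ range (k + 1), (k.choose j : ℝ) * β j
      ≤ y ^ k / k ! * ∑ j ∈ range (k + 1), (k.choose j : ℝ) * (K * D ^ j) := by
        gcongr with j
        exact hβ j
    _ = K * ((y * (D + 1)) ^ k / k !) := by
        simp only [mul_pow, add_pow, one_pow, mul_one, mul_sum, sum_div]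
        exact sum_congr rfl fun j _ => by ring

theorem summable_pow_div_factorial_mul_fwdDiff (x : ℝ)
    (hB : ∀ j, HasSum (fun n => B n j) (β j)) (hmB : ∀ n j, |m n j * w n| ≤ B n j)
    (hβ : ∀ j, β j ≤ K * D ^ j) :
    Summable fun p : ℕ × ℕ => x ^ p.1 / p.1 ! * (Δ_[1] ^[p.1] (m p.2) 0 * w p.2) := by
  refine (summable_pow_div_factorial_mul_sum_choose_mul (abs_nonneg x)
    (fun n j => (abs_nonneg _).trans (hmB n j)) hB hβ).of_norm_bounded fun ⟨k, n⟩ => ?_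
  have hdiff : |Δ_[1] ^[k] (m n) 0 * w n| ≤ ∑ j ∈ range (k + 1), (k.choose j : ℝ) * B n j := by
    rw [abs_mul]
    refine (mul_le_mul_of_nonneg_right (abs_fwdDiff_iter_apply_zero_le _ k) (abs_nonneg _)).trans ?_
    rw [sum_mul]
    refine sum_le_sum fun j _ => ?_
    rw [mul_assoc, ← abs_mul]
    exact mul_le_mul_of_nonneg_left (hmB n j) (Nat.cast_nonneg _)
  rw [Real.norm_eq_abs, abs_mul, abs_div, abs_pow, Nat.abs_cast]
  gcongr

theorem hasSum_sum_pow_div_factorial_mul_fwdDiff {A M : ℝ} (x : ℝ)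
    (hm : ∀ j, HasSum (fun n => m n j * w n) (A * M ^ j))
    (hB : ∀ j, HasSum (fun n => B n j) (β j)) (hmB : ∀ n j, |m n j * w n| ≤ B n j)
    (hβ : ∀ j, β j ≤ K * D ^ j) (hm_eq_zero : ∀ n k, n < k → Δ_[1] ^[k] (m n) 0 = 0) :
    HasSum (fun n => (∑ k ∈ range (n + 1), x ^ k / k ! * Δ_[1] ^[k] (m n) 0) * w n)
      (A * exp (x * (M - 1))) := by
  set f : ℕ × ℕ → ℝ := fun p => x ^ p.1 / p.1 ! * (Δ_[1] ^[p.1] (m p.2) 0 * w p.2)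
  have hf := (summable_pow_div_factorial_mul_fwdDiff x hB hmB hβ).hasSum
  have hcol : ∀ k, HasSum (fun n => f (k, n)) (x ^ k / k ! * (A * (M - 1) ^ k)) := by
    intro k
    have h := HasSum.fwdDiff_iter (a := fun n => w n • m n) (fun j => by
      simpa only [Pi.smul_apply, smul_eq_mul, mul_comm] using hm j) k 0
    simp only [fwdDiff_iter_const_smul, fwdDiff_iter_const_mul_pow, Pi.smul_apply, smul_eq_mul,
      pow_zero, mul_one] at h
    exact (h.mul_left (x ^ k / k !)).congr_fun fun n => by simp only [f]; ring
  have hrow : ∀ n, HasSum (fun k => f (k, n))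
      ((∑ k ∈ range (n + 1), x ^ k / k ! * Δ_[1] ^[k] (m n) 0) * w n) := by
    intro n
    rw [sum_mul]
    simp_rw [mul_assoc]
    exact hasSum_sum_of_ne_finset_zero fun k hk => by
      simp [f, hm_eq_zero n k (by simpa using hk)]
  have hexp : HasSum (fun k => x ^ k / k ! * (A * (M - 1) ^ k)) (A * exp (x * (M - 1))) := by
    refine ((hasSum_pow_div_factorial_exp (x * (M - 1))).mul_left A).congr_fun fun k => ?_
    rw [mul_pow]
    ring
  rw [hexp.unique (hf.prod_fiberwise hcol)]
  exact ((Equiv.prodComm ℕ ℕ).hasSum_iff.mpr hf).prod_fiberwise hrow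

end ExponentialTransform

section Moments

variable {Ω : Type*} [MeasurableSpace Ω] {μ : Measure Ω} {X : Ω → ℝ} {t : ℝ}

theorem hasSum_integral_pow_mul_pow_div_factorial (hX : AEStronglyMeasurable X μ)
    (hexp : Integrable (fun ω => exp (|t| * |X ω|)) μ) :
    HasSum (fun n => (∫ ω, X ω ^ n ∂μ) * (t ^ n / n !)) (∫ ω, exp (t * X ω) ∂μ) := by
  have h := hasSum_integral_of_dominated_convergence (F := fun n ω => (t * X ω) ^ n / n !)
    (fun n ω => (|t| * |X ω|) ^ n / n !) (fun n => by fun_prop)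
    (fun n => ae_of_all _ fun ω => by simp)
    (ae_of_all _ fun ω => Real.summable_pow_div_factorial _)
    (by simpa only [(hasSum_pow_div_factorial_exp _).tsum_eq] using hexp)
    (ae_of_all _ fun ω => hasSum_pow_div_factorial_exp _)
  refine h.congr_fun fun n => ?_
  rw [← integral_mul_const]
  exact integral_congr_ae (ae_of_all _ fun ω => by simp only [mul_pow]; ring)

theorem hasSum_integral_abs_pow_mul_pow_div_factorial (hX : AEStronglyMeasurable X μ)
    (hexp : Integrable (fun ω => exp (|t| * |X ω|)) μ) :
    HasSum (fun n => (∫ ω, |X ω| ^ n ∂μ) * (|t| ^ n / n !)) (∫ ω, exp (|t| * |X ω|) ∂μ) :=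
  hasSum_integral_pow_mul_pow_div_factorial hX.norm (by simpa only [abs_abs] using hexp)

theorem abs_integral_pow_mul_pow_div_factorial_le (n : ℕ) :
    |(∫ ω, X ω ^ n ∂μ) * (t ^ n / n !)| ≤ (∫ ω, |X ω| ^ n ∂μ) * (|t| ^ n / n !) := by
  rw [abs_mul, abs_div, abs_pow, Nat.abs_cast]
  refine mul_le_mul_of_nonneg_right ?_ (by positivity)
  simpa only [abs_pow] using abs_integral_le_integral_abs (f := fun ω => X ω ^ n) (μ := μ)

theorem integral_exp_abs_mul_abs_le (hpos : Integrable (fun ω => exp (t * X ω)) μ)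
    (hneg : Integrable (fun ω => exp (-t * X ω)) μ) :
    ∫ ω, exp (|t| * |X ω|) ∂μ ≤ ∫ ω, exp (t * X ω) ∂μ + ∫ ω, exp (-t * X ω) ∂μ := by
  rw [← integral_add hpos hneg]
  refine integral_mono (integrable_exp_abs_mul_abs hpos hneg) (hpos.add hneg) fun ω => ?_
  simpa only [← abs_mul, neg_mul] using exp_abs_le (t * X ω)

theorem integrable_pow_of_forall_abs_lt {ε : ℝ} (hε : 0 < ε)
    (hexp : ∀ t : ℝ, |t| < ε → Integrable (fun ω => exp (t * X ω)) μ) (n : ℕ) :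
    Integrable (fun ω => X ω ^ n) μ := by
  have hε' : |ε / 2| < ε := by rw [abs_of_pos (half_pos hε)]; linarith
  exact integrable_pow_of_integrable_exp_mul (half_pos hε).ne' (hexp _ hε')
    (hexp _ (by rwa [abs_neg])) n

theorem ProbabilityTheory.IdentDistrib.integrable_exp_mul {Ω' : Type*} [MeasurableSpace Ω']
    {ν : Measure Ω'} {Y : Ω' → ℝ} (h : IdentDistrib X Y μ ν)
    (hY : Integrable (fun ω => exp (t * Y ω)) ν) : Integrable (fun ω => exp (t * X ω)) μ :=
  (h.comp (measurable_const_mul t).exp).integrable_iff.mpr hY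

end Moments

noncomputable def partialSumMoment {Ω : Type*} [MeasurableSpace Ω] (μ : Measure Ω)
    (Ys : ℕ → Ω → ℝ) (r : ℝ) (n j : ℕ) : ℝ :=
  ∫ ω, (∑ i ∈ range j, Ys i ω + r) ^ n ∂μ

theorem probStirling_eq_fwdDiff {Ω : Type*} [MeasurableSpace Ω] (μ : Measure Ω)
    (Ys : ℕ → Ω → ℝ) (r n k : ℕ) :
    probStirling μ Ys r n k = Δ_[1] ^[k] (partialSumMoment μ Ys r n) 0 / k ! := by
  rw [probStirling, fwdDiff_iter_nat_apply_zero, one_div_mul_eq_div]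
  rfl

section PartialSums

variable {Ω : Type*} [MeasurableSpace Ω] {μ : Measure Ω} {Y : Ω → ℝ} {Ys : ℕ → Ω → ℝ}
  {ε : ℝ}

theorem mgf_partialSum_add (hindep : iIndepFun Ys μ) (hident : ∀ i, IdentDistrib (Ys i) Y μ μ)
    (v r : ℝ) (j : ℕ) :
    mgf (fun ω => ∑ i ∈ range j, Ys i ω + r) μ v = exp (v * r) * mgf Y μ v ^ j := by
  have hsum : (fun ω => ∑ i ∈ range j, Ys i ω) = ∑ i ∈ range j, Ys i := by
    ext ω
    simp
  rw [mgf_add_const, hsum, hindep.mgf_sum₀ (fun i => (hident i).aemeasurable_fst),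
    prod_congr rfl fun i _ => by rw [mgf_congr_identDistrib (hident i)], prod_const, card_range,
    mul_comm]

theorem integrable_exp_mul_partialSum_add (hindep : iIndepFun Ys μ)
    (hident : ∀ i, IdentDistrib (Ys i) Y μ μ)
    (hmgf : ∀ t : ℝ, |t| < ε → Integrable (fun ω => exp (t * Y ω)) μ) {v : ℝ} (hv : |v| < ε)
    (r : ℝ) (j : ℕ) : Integrable (fun ω => exp (v * (∑ i ∈ range j, Ys i ω + r))) μ := by
  have := hindep.isProbabilityMeasure
  have hsum : Integrable (fun ω => exp (v * ∑ i ∈ range j, Ys i ω)) μ := by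
    induction j with
    | zero => simp
    | succ j ih =>
      have hind := hindep.indepFun_finsetSum_of_notMem₀ (fun i => (hident i).aemeasurable_fst)
        (notMem_range_self (n := j))
      simpa [Finset.sum_apply, sum_range_succ] using hind.integrable_exp_mul_add
        (by simpa [Finset.sum_apply] using ih) ((hident j).integrable_exp_mul (hmgf v hv))
  simpa only [mul_add, exp_add] using hsum.mul_const (exp (v * r))

theorem aestronglyMeasurable_partialSum_add (hident : ∀ i, IdentDistrib (Ys i) Y μ μ) (r : ℝ)
    (j : ℕ) : AEStronglyMeasurable (fun ω => ∑ i ∈ range j, Ys i ω + r) μ := by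
  have := fun i => (hident i).aemeasurable_fst
  fun_prop

theorem integrable_exp_abs_mul_abs_partialSum_add (hindep : iIndepFun Ys μ)
    (hident : ∀ i, IdentDistrib (Ys i) Y μ μ)
    (hmgf : ∀ t : ℝ, |t| < ε → Integrable (fun ω => exp (t * Y ω)) μ) {t : ℝ} (ht : |t| < ε)
    (r : ℝ) (j : ℕ) : Integrable (fun ω => exp (|t| * |∑ i ∈ range j, Ys i ω + r|)) μ :=
  integrable_exp_abs_mul_abs (integrable_exp_mul_partialSum_add hindep hident hmgf ht r j)
    (integrable_exp_mul_partialSum_add hindep hident hmgf (by rwa [abs_neg]) r j)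

theorem integral_exp_abs_mul_abs_partialSum_add_le (hindep : iIndepFun Ys μ)
    (hident : ∀ i, IdentDistrib (Ys i) Y μ μ)
    (hmgf : ∀ t : ℝ, |t| < ε → Integrable (fun ω => exp (t * Y ω)) μ) {t : ℝ} (ht : |t| < ε)
    (r : ℝ) (j : ℕ) :
    ∫ ω, exp (|t| * |∑ i ∈ range j, Ys i ω + r|) ∂μ
      ≤ (exp (t * r) + exp (-t * r)) * (mgf Y μ t + mgf Y μ (-t)) ^ j := by
  have hle := integral_exp_abs_mul_abs_le
    (integrable_exp_mul_partialSum_add hindep hident hmgf ht r j)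
    (integrable_exp_mul_partialSum_add hindep hident hmgf (by rwa [abs_neg]) r j)
  have hpos : mgf Y μ t ^ j ≤ (mgf Y μ t + mgf Y μ (-t)) ^ j :=
    pow_le_pow_left₀ mgf_nonneg (le_add_of_nonneg_right mgf_nonneg) j
  have hneg : mgf Y μ (-t) ^ j ≤ (mgf Y μ t + mgf Y μ (-t)) ^ j :=
    pow_le_pow_left₀ mgf_nonneg (le_add_of_nonneg_left mgf_nonneg) j
  refine hle.trans ?_
  rw [← mgf, ← mgf, mgf_partialSum_add hindep hident, mgf_partialSum_add hindep hident, add_mul]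
  gcongr

theorem partialSumMoment_succ (hε : 0 < ε) (hindep : iIndepFun Ys μ)
    (hident : ∀ i, IdentDistrib (Ys i) Y μ μ)
    (hmgf : ∀ t : ℝ, |t| < ε → Integrable (fun ω => exp (t * Y ω)) μ) (r : ℝ) (n j : ℕ) :
    partialSumMoment μ Ys r n (j + 1) = ∑ i ∈ range (n + 1),
      ((n.choose i : ℝ) * ∫ ω, Y ω ^ (n - i) ∂μ) * partialSumMoment μ Ys r i j := by
  have := hindep.isProbabilityMeasure
  have hXint : ∀ i, Integrable (fun ω => (∑ i ∈ range j, Ys i ω + r) ^ i) μ :=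
    integrable_pow_of_forall_abs_lt hε fun t ht =>
      integrable_exp_mul_partialSum_add hindep hident hmgf ht r j
  have hYint : ∀ i, Integrable (fun ω => Ys j ω ^ i) μ :=
    integrable_pow_of_forall_abs_lt hε fun t ht => (hident j).integrable_exp_mul (hmgf t ht)
  have hYmoment : ∀ i, ∫ ω, Ys j ω ^ i ∂μ = ∫ ω, Y ω ^ i ∂μ := fun i =>
    ((hident j).comp (measurable_id.pow_const i)).integral_eq
  have hind : IndepFun (fun ω => ∑ i ∈ range j, Ys i ω + r) (Ys j) μ := by
    have h := hindep.indepFun_finsetSum_of_notMem₀ (fun i => (hident i).aemeasurable_fst)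
      (notMem_range_self (n := j))
    convert h.comp (measurable_add_const r) measurable_id using 1 <;> ext ω <;> simp
  have hterm : ∀ i, IndepFun (fun ω => (∑ i ∈ range j, Ys i ω + r) ^ i)
      (fun ω => Ys j ω ^ (n - i)) μ :=
    fun i => hind.comp (measurable_id.pow_const i) (measurable_id.pow_const (n - i))
  calc partialSumMoment μ Ys r n (j + 1)
      = ∫ ω, ∑ i ∈ range (n + 1),
          (∑ i ∈ range j, Ys i ω + r) ^ i * Ys j ω ^ (n - i) * (n.choose i : ℝ) ∂μ := by
        simp only [partialSumMoment, sum_range_succ _ j, add_right_comm _ (Ys j _), add_pow]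
    _ = ∑ i ∈ range (n + 1),
          ∫ ω, (∑ i ∈ range j, Ys i ω + r) ^ i * Ys j ω ^ (n - i) * (n.choose i : ℝ) ∂μ :=
        integral_finsetSum _ fun i _ =>
          ((hterm i).integrable_mul (hXint i) (hYint (n - i))).mul_const _
    _ = _ := by
        refine sum_congr rfl fun i _ => ?_
        rw [integral_mul_const, (hterm i).integral_fun_mul_eq_mul_integral
          (hXint i).aestronglyMeasurable (hYint _).aestronglyMeasurable, hYmoment,
          partialSumMoment]
        ring

theorem fwdDiff_partialSumMoment (hε : 0 < ε) (hindep : iIndepFun Ys μ)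
    (hident : ∀ i, IdentDistrib (Ys i) Y μ μ)
    (hmgf : ∀ t : ℝ, |t| < ε → Integrable (fun ω => exp (t * Y ω)) μ) (r : ℝ) (n : ℕ) :
    Δ_[1] (partialSumMoment μ Ys r n) = ∑ i ∈ range n,
      ((n.choose i : ℝ) * ∫ ω, Y ω ^ (n - i) ∂μ) • partialSumMoment μ Ys r i := by
  have := hindep.isProbabilityMeasure
  ext j
  simp [fwdDiff, partialSumMoment_succ hε hindep hident hmgf, sum_range_succ]

theorem fwdDiff_iter_partialSumMoment_eq_zero (hε : 0 < ε)
    (hindep : iIndepFun Ys μ) (hident : ∀ i, IdentDistrib (Ys i) Y μ μ)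
    (hmgf : ∀ t : ℝ, |t| < ε → Integrable (fun ω => exp (t * Y ω)) μ) (r : ℝ) {n k : ℕ}
    (hnk : n < k) : Δ_[1] ^[k] (partialSumMoment μ Ys r n) = 0 :=
  fwdDiff_iter_eq_zero_of_lt_of_triangular (fwdDiff_partialSumMoment hε hindep hident hmgf r) hnk

theorem hasSum_partialSumMoment_mul (hindep : iIndepFun Ys μ)
    (hident : ∀ i, IdentDistrib (Ys i) Y μ μ)
    (hmgf : ∀ t : ℝ, |t| < ε → Integrable (fun ω => exp (t * Y ω)) μ) {t : ℝ} (ht : |t| < ε)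
    (r : ℝ) (j : ℕ) :
    HasSum (fun n => partialSumMoment μ Ys r n j * (t ^ n / n !))
      (exp (t * r) * mgf Y μ t ^ j) := by
  rw [← mgf_partialSum_add hindep hident]
  exact hasSum_integral_pow_mul_pow_div_factorial (aestronglyMeasurable_partialSum_add hident r j)
    (integrable_exp_abs_mul_abs_partialSum_add hindep hident hmgf ht r j)

end PartialSums

theorem probBell_generating_function_general
    {Ω : Type*} [MeasurableSpace Ω] (μ : Measure Ω)
    (Y : Ω → ℝ) (Ys : ℕ → Ω → ℝ)
    (hindep : iIndepFun Ys μ)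
    (hident : ∀ i, IdentDistrib (Ys i) Y μ μ)
    (ε : ℝ) (hε : 0 < ε)
    (hmgf : ∀ t : ℝ, |t| < ε → Integrable (fun ω => Real.exp (t * Y ω)) μ)
    (x : ℝ) (r : ℕ) :
    ∃ δ : ℝ, 0 < δ ∧ δ ≤ ε ∧ ∀ t : ℝ, |t| < δ →
      HasSum (fun n : ℕ => probBell μ Ys r n x * t ^ n / (Nat.factorial n : ℝ))
        (Real.exp (x * ((∫ ω, Real.exp (t * Y ω) ∂μ) - 1)) * Real.exp (r * t)) := by
  refine ⟨ε, hε, le_rfl, fun t ht => ?_⟩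
  have h := hasSum_sum_pow_div_factorial_mul_fwdDiff x
    (hasSum_partialSumMoment_mul hindep hident hmgf ht r)
    (fun j => hasSum_integral_abs_pow_mul_pow_div_factorial
      (aestronglyMeasurable_partialSum_add hident r j)
      (integrable_exp_abs_mul_abs_partialSum_add hindep hident hmgf ht r j))
    (fun n j => abs_integral_pow_mul_pow_div_factorial_le n)
    (integral_exp_abs_mul_abs_partialSum_add_le hindep hident hmgf ht r)
    (fun n k hnk => congrFun (fwdDiff_iter_partialSumMoment_eq_zero hε hindep hident hmgf r hnk) 0)
  convert h using 1
  · ext n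
    simp only [probBell, probStirling_eq_fwdDiff, sum_mul, sum_div]
    exact sum_congr rfl fun k _ => by ring
  · rw [mul_comm, mul_comm t]
    rfl

/-- Generating function of the probabilistic `r`-Bell polynomials: for `t` in a
neighborhood of `0` on which the mgf of `Y` is finite,
`e^{x(E[e^{tY}] - 1)} e^{rt} = Σ_{n=0}^∞ φ_{n,r}^Y(x) t^n/n!`. -/
theorem probBell_generating_function
    {Ω : Type*} [MeasurableSpace Ω] (μ : Measure Ω) [IsProbabilityMeasure μ]
    (Y : Ω → ℝ) (Ys : ℕ → Ω → ℝ)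
    (hY : Measurable Y) (hYs : ∀ i, Measurable (Ys i))
    (hindep : iIndepFun Ys μ)
    (hident : ∀ i, IdentDistrib (Ys i) Y μ μ)
    (ε : ℝ) (hε : 0 < ε)
    (hmgf : ∀ t : ℝ, |t| < ε → Integrable (fun ω => Real.exp (t * Y ω)) μ)
    (x : ℝ) (r : ℕ) :
    ∃ δ : ℝ, 0 < δ ∧ δ ≤ ε ∧ ∀ t : ℝ, |t| < δ →
      HasSum (fun n : ℕ => probBell μ Ys r n x * t ^ n / (Nat.factorial n : ℝ))
        (Real.exp (x * ((∫ ω, Real.exp (t * Y ω) ∂μ) - 1)) * Real.exp (r * t)) :=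
  probBell_generating_function_general μ Y Ys hindep hident ε hε hmgf x r
end

section
/- (Spivey's recurrence.) For all integers n, l ≥ 0, the Bell numbers satisfy φ_{l+n} = Σ_{k=0}^{n} Σ_{m=0}^{l} binom(l,m) S(n,k) k^{l−m} φ_{m}, where 0^0 is interpreted as 1. -/
/-- The Stirling numbers of the second kind `S(n,k)`, counting the number of
partitions of an `n`-element set into `k` nonempty blocks, via the standard
recurrence `S(n+1,k+1) = (k+1) S(n,k+1) + S(n,k)`. -/
def stirling2 : ℕ → ℕ → ℕ
  | 0, 0 => 1
  | 0, _ + 1 => 0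
  | _ + 1, 0 => 0
  | n + 1, k + 1 => (k + 1) * stirling2 n (k + 1) + stirling2 n k

/-- The Bell numbers `φ_n = Σ_{k=0}^n S(n,k)`. -/
def bellNum (n : ℕ) : ℕ := ∑ k ∈ Finset.range (n + 1), stirling2 n k

/-!
Let `L` be the linear functional on `ℕ[X]` with `L (X ^ m) = φ_m`. The Bell recurrence
`φ_{m+1} = ∑ C(m,j) φ_j` says `L (X * p) = L (p(X + 1))`, whence
`L ((X + k) ^ (l + 1)) = k L ((X + k) ^ l) + L ((X + k + 1) ^ l)`. Spivey's right-hand side is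
`∑ₖ S(n,k) L ((X + k) ^ l)`, and by the Stirling recurrence this sum is unchanged when `(n, l + 1)`
is replaced by `(n + 1, l)`. Induction on `l` thus reduces to `l = 0`, where it is `∑ₖ S(n,k) = φ_n`.
-/

open Finset Polynomial

theorem stirling2_succ_succ (n k : ℕ) :
    stirling2 (n + 1) (k + 1) = (k + 1) * stirling2 n (k + 1) + stirling2 n k := rfl

theorem stirling2_succ_zero (n : ℕ) : stirling2 (n + 1) 0 = 0 := rfl

theorem stirling2_eq_zero_of_lt : ∀ {n k : ℕ}, n < k → stirling2 n k = 0
  | 0, _ + 1, _ => rfl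
  | n + 1, k + 1, h => by
    rw [stirling2_succ_succ, stirling2_eq_zero_of_lt (by omega), stirling2_eq_zero_of_lt (by omega)]
    rfl

theorem sum_range_stirling2 {n N : ℕ} (h : n < N) :
    ∑ k ∈ range N, stirling2 n k = bellNum n := by
  obtain ⟨d, rfl⟩ := Nat.exists_eq_add_of_le h
  rw [bellNum, sum_range_add, add_eq_left]
  exact sum_eq_zero fun k _ => stirling2_eq_zero_of_lt (by omega)

theorem sum_range_succ_stirling2_smul {M : Type*} [AddCommMonoid M] (n : ℕ) (f : ℕ → M) :
    ∑ k ∈ range (n + 2), stirling2 (n + 1) k • f k =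
      ∑ k ∈ range (n + 1), stirling2 n k • (k • f k + f (k + 1)) := by
  rw [sum_range_succ', stirling2_succ_zero, zero_smul, add_zero]
  simp only [stirling2_succ_succ, add_smul, smul_add, sum_add_distrib]
  congr 1
  calc ∑ k ∈ range (n + 1), ((k + 1) * stirling2 n (k + 1)) • f (k + 1)
      = ∑ k ∈ range (n + 2), (k * stirling2 n k) • f k := by simp [sum_range_succ' _ (n + 1)]
    _ = ∑ k ∈ range (n + 1), (k * stirling2 n k) • f k := by
      simp [sum_range_succ _ (n + 1), stirling2_eq_zero_of_lt n.lt_succ_self]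
    _ = _ := sum_congr rfl fun k _ => by rw [mul_comm, mul_smul]

theorem stirling2_succ_succ_eq_sum_choose (m r : ℕ) :
    stirling2 (m + 1) (r + 1) = ∑ j ∈ range (m + 1), m.choose j * stirling2 j r := by
  induction m generalizing r with
  | zero => simp [stirling2_succ_succ, stirling2_eq_zero_of_lt]
  | succ m ih =>
    have hshift : ∑ j ∈ range (m + 1), m.choose j * stirling2 (j + 1) r =
        r * stirling2 (m + 1) (r + 1) + stirling2 (m + 1) r := by
      cases r with
      | zero => simp [stirling2_succ_zero]
      | succ r =>
        simp only [stirling2_succ_succ, mul_add, sum_add_distrib, mul_left_comm _ (r + 1 : ℕ),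
          ← mul_sum, ← ih]
    have hpascal := sum_choose_succ_mul (fun j _ => stirling2 j r) m
    simp only [Nat.cast_id] at hpascal
    rw [hpascal, ← ih, hshift, stirling2_succ_succ]
    ring

theorem bellNum_succ (m : ℕ) :
    bellNum (m + 1) = ∑ j ∈ range (m + 1), m.choose j * bellNum j := by
  rw [bellNum, sum_range_succ', stirling2_succ_zero, add_zero]
  simp only [stirling2_succ_succ_eq_sum_choose]
  rw [sum_comm]
  refine sum_congr rfl fun j hj => ?_
  rw [← mul_sum, sum_range_stirling2 (mem_range.mp hj)]

noncomputable def bellFunctional : ℕ[X] →ₗ[ℕ] ℕ :=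
  lsum fun m => bellNum m • LinearMap.id

theorem bellFunctional_monomial (m a : ℕ) : bellFunctional (monomial m a) = a * bellNum m := by
  simp [bellFunctional, mul_comm]

theorem bellFunctional_one : bellFunctional 1 = 1 := by
  simpa [bellNum, stirling2] using bellFunctional_monomial 0 1

theorem bellFunctional_X_add_C_pow (k l : ℕ) :
    bellFunctional ((X + C k) ^ l) = ∑ m ∈ range (l + 1), l.choose m * k ^ (l - m) * bellNum m := by
  rw [bellFunctional, lsum_apply, sum_over_range' _ (fun _ => by simp) (l + 1)
    (by rw [natDegree_pow_X_add_C]; omega)]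
  refine sum_congr rfl fun m _ => ?_
  rw [coeff_X_add_C_pow]
  simp only [LinearMap.smul_apply, LinearMap.id_apply, smul_eq_mul, Nat.cast_id]
  ring

theorem bellFunctional_X_mul (p : ℕ[X]) :
    bellFunctional (X * p) = bellFunctional (p.comp (X + 1)) := by
  induction p using Polynomial.induction_on' with
  | add p q hp hq => rw [mul_add, add_comp, map_add, map_add, hp, hq]
  | monomial m a =>
    have h := bellFunctional_X_add_C_pow 1 m
    simp only [map_one, one_pow, mul_one] at h
    rw [X_mul_monomial, bellFunctional_monomial, bellNum_succ, ← C_mul_X_pow_eq_monomial, mul_comp,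
      C_comp, X_pow_comp, ← smul_eq_C_mul, map_smul, h, smul_eq_mul]

theorem bellFunctional_X_add_C_pow_succ (k l : ℕ) :
    bellFunctional ((X + C k) ^ (l + 1)) =
      k * bellFunctional ((X + C k) ^ l) + bellFunctional ((X + C (k + 1)) ^ l) := by
  rw [pow_succ', add_mul, map_add, bellFunctional_X_mul, ← smul_eq_C_mul, map_smul,
    smul_eq_mul, add_comm]
  simp only [pow_comp, add_comp, X_comp, C_comp, map_add, map_one, add_assoc, add_comm (1 : ℕ[X])]

theorem bellNum_add_eq_sum_stirling2_mul (n l : ℕ) :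
    bellNum (l + n) = ∑ k ∈ range (n + 1), stirling2 n k * bellFunctional ((X + C k) ^ l) := by
  induction l generalizing n with
  | zero => simp [bellFunctional_one, bellNum]
  | succ l ih =>
    have h := sum_range_succ_stirling2_smul n fun k => bellFunctional ((X + C k) ^ l)
    simp only [smul_eq_mul] at h
    rw [show l + 1 + n = l + (n + 1) by omega, ih, h]
    simp only [bellFunctional_X_add_C_pow_succ]

/-- Spivey's recurrence for the Bell numbers. -/
theorem spivey_recurrence (n l : ℕ) :
    bellNum (l + n) =
      ∑ k ∈ Finset.range (n + 1), ∑ m ∈ Finset.range (l + 1),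
        l.choose m * stirling2 n k * k ^ (l - m) * bellNum m := by
  rw [bellNum_add_eq_sum_stirling2_mul]
  refine sum_congr rfl fun k _ => ?_
  rw [bellFunctional_X_add_C_pow, mul_sum]
  exact sum_congr rfl fun m _ => by ring
end

section
/- For all integers n, l ≥ 0 and every real y, the Bell polynomials satisfy φ_{l+n}(y) = Σ_{k=0}^{n} Σ_{m=0}^{l} binom(l,m) y^k S(n,k) k^{l−m} φ_{m}(y), where 0^0 is interpreted as 1. -/
/-- The Bell polynomials `φ_n(y) = Σ_{k=0}^n S(n,k) y^k`. -/
noncomputable def bellPoly (n : ℕ) (y : ℝ) : ℝ :=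
  ∑ k ∈ Finset.range (n + 1), (stirling2 n k : ℝ) * y ^ k

/-!
Let `T p = X (p' + p)` (`bellStep`). By the Stirling recurrence `T (∑ₖ S(n,k) Xᵏ) = ∑ₖ S(n+1,k) Xᵏ`,
so `φₙ = Tⁿ 1`. The Leibniz rule gives `T (Xᵏ q) = Xᵏ (T + k) q`, hence
`Tˡ (Xᵏ q) = Xᵏ (T + k)ˡ q = Xᵏ ∑ₘ C(l,m) kˡ⁻ᵐ Tᵐ q` by the binomial theorem for the commuting
operators `T` and `k`. Apply this to `φ_{l+n} = Tˡ φₙ = ∑ₖ S(n,k) Tˡ (Xᵏ · 1)`.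
-/

open Polynomial Finset

theorem stirling2_eq_stirlingSecond : ∀ n k, stirling2 n k = Nat.stirlingSecond n k
  | 0, 0 | 0, _ + 1 | _ + 1, 0 => rfl
  | n + 1, k + 1 => by
    rw [stirling2, Nat.stirlingSecond_succ_succ, stirling2_eq_stirlingSecond n,
      stirling2_eq_stirlingSecond n]

section

variable (R : Type*) [CommSemiring R]

noncomputable def bellPolynomial (n : ℕ) : R[X] :=
  ∑ k ∈ range (n + 1), Nat.stirlingSecond n k • (X : R[X]) ^ k

noncomputable def bellStep : Module.End R R[X] :=
  LinearMap.mulLeft R X * (derivative + 1)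

variable {R}

theorem bellStep_apply (p : R[X]) : bellStep R p = X * (derivative p + p) := rfl

theorem coeff_bellPolynomial (n k : ℕ) :
    (bellPolynomial R n).coeff k = Nat.stirlingSecond n k := by
  simp only [bellPolynomial, finsetSum_coeff, coeff_smul, coeff_X_pow, smul_ite, smul_zero,
    nsmul_one, sum_ite_eq, mem_range]
  split_ifs with hk
  · rfl
  · rw [Nat.stirlingSecond_eq_zero_of_lt (by omega), Nat.cast_zero]

theorem bellPolynomial_succ (n : ℕ) :
    bellPolynomial R (n + 1) = bellStep R (bellPolynomial R n) := by
  ext (_ | k)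
  · simp [bellStep_apply, coeff_bellPolynomial]
  · simp only [bellStep_apply, coeff_X_mul, coeff_add, coeff_derivative, coeff_bellPolynomial,
      Nat.stirlingSecond_succ_succ]
    push_cast
    ring

theorem bellStep_pow_one (n : ℕ) : (bellStep R ^ n) 1 = bellPolynomial R n := by
  induction n with
  | zero => simp [bellPolynomial]
  | succ n ih => rw [pow_succ', Module.End.mul_apply, ih, bellPolynomial_succ]

theorem semiconjBy_mulLeft_X_pow_bellStep (k : ℕ) :
    SemiconjBy (LinearMap.mulLeft R (X ^ k)) (bellStep R + (k : Module.End R R[X]))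
      (bellStep R) := by
  have hX : (X : R[X]) * derivative (X ^ k) = (k : R[X]) * X ^ k := by
    cases k with
    | zero => simp
    | succ k => rw [derivative_X_pow, C_eq_natCast, pow_succ]; push_cast; ring
  refine LinearMap.ext fun q => ?_
  simp only [Module.End.mul_apply, LinearMap.add_apply, Module.End.natCast_apply,
    LinearMap.mulLeft_apply, bellStep_apply, derivative_mul, nsmul_eq_mul]
  rw [show X * (derivative (X ^ k) * q + X ^ k * derivative q + X ^ k * q)
      = X * derivative (X ^ k) * q + X ^ k * (X * (derivative q + q)) by ring, hX]
  ring

theorem bellStep_pow_X_pow_mul (l k : ℕ) (q : R[X]) :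
    (bellStep R ^ l) (X ^ k * q) =
      X ^ k * ∑ m ∈ range (l + 1), (l.choose m * k ^ (l - m)) • (bellStep R ^ m) q := by
  have h := LinearMap.congr_fun ((semiconjBy_mulLeft_X_pow_bellStep (R := R) k).pow_right l).eq q
  simp only [Module.End.mul_apply, LinearMap.mulLeft_apply] at h
  rw [← h, (Nat.commute_cast (bellStep R) k).add_pow, LinearMap.sum_apply]
  congr 1
  refine sum_congr rfl fun m _ => ?_
  rw [← Nat.cast_pow, mul_assoc, ← Nat.cast_mul, Module.End.mul_apply, Module.End.natCast_apply,
    map_nsmul, mul_comm]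

theorem bellPolynomial_add (n l : ℕ) :
    bellPolynomial R (l + n) = ∑ k ∈ range (n + 1), ∑ m ∈ range (l + 1),
      (Nat.stirlingSecond n k * (l.choose m * k ^ (l - m))) • (X ^ k * bellPolynomial R m) := by
  rw [← bellStep_pow_one, pow_add, Module.End.mul_apply, bellStep_pow_one, bellPolynomial,
    map_sum]
  refine sum_congr rfl fun k _ => ?_
  rw [map_nsmul, ← mul_one (X ^ k), bellStep_pow_X_pow_mul, mul_sum, smul_sum]
  simp only [bellStep_pow_one, mul_one, mul_smul_comm, smul_smul]

end

theorem eval_bellPolynomial (n : ℕ) (y : ℝ) : (bellPolynomial ℝ n).eval y = bellPoly n y := by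
  simp [bellPolynomial, bellPoly, eval_finsetSum, stirling2_eq_stirlingSecond]

/-- Spivey's recurrence for the Bell polynomials. -/
theorem spivey_recurrence_bellPoly (n l : ℕ) (y : ℝ) :
    bellPoly (l + n) y =
      ∑ k ∈ Finset.range (n + 1), ∑ m ∈ Finset.range (l + 1),
        (l.choose m : ℝ) * y ^ k * (stirling2 n k : ℝ) * (k : ℝ) ^ (l - m) *
          bellPoly m y := by
  rw [← eval_bellPolynomial, bellPolynomial_add]
  simp only [eval_finsetSum, nsmul_eq_mul, eval_mul, eval_pow, eval_natCast, eval_X,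
    eval_bellPolynomial, Nat.cast_mul, Nat.cast_pow, stirling2_eq_stirlingSecond]
  refine sum_congr rfl fun k _ => sum_congr rfl fun m _ => ?_
  ring
end
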